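/- arXiv:1712.04506 — 2 statements merged into one kernel-verified Lean document; each statement's English description precedes it below -/
import Mathlib

section
/- Let σ ∈ 𝒞_q with des(σ) = d and sig(σ) = (a₁,…,a_q), and let k > d. Then the number of realizations of σ under m_k equals the binomial coefficient C(q+k−d, q) if a_q = 1, and equals C(q+k−d−1, q) if a_q = 0. -/
open scoped Classical

noncomputable section

/-- The representative of `i : ZMod q` in `{1, …, q}`. -/
def rep (q : ℕ) [NeZero q] (i : ZMod q) : ℕ :=
  if i = 0 then q else i.val

/-- The rotation `ρ : i ↦ i + 1 (mod q)` of `ZMod q`. -/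
def rotPerm (q : ℕ) : Equiv.Perm (ZMod q) :=
  Equiv.addRight 1

/-- The descent number `des σ`: the number of `i ∈ ZMod q` with `σ(i) > σ(i+1)`,
values compared via their representatives in `{1, …, q}`. -/
def desNum (q : ℕ) [NeZero q] (σ : Equiv.Perm (ZMod q)) : ℕ :=
  (Finset.univ.filter fun i : ZMod q => rep q (σ (i + 1)) < rep q (σ i)).card

/-- `σ` is a `q`-cycle, i.e. it acts transitively on `ZMod q`. -/
def IsQCycle (q : ℕ) (σ : Equiv.Perm (ZMod q)) : Prop :=
  ∀ i j : ZMod q, ∃ n : ℕ, (σ ^ n) i = j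

/-- The transition matrix of `σ`: the `(i,j)` entry is `1` if `j` lies in the
cyclic interval `[σ(i), σ(i+1))` of `ZMod q` and `0` otherwise. -/
def transMatrix (q : ℕ) [NeZero q] (σ : Equiv.Perm (ZMod q)) :
    Matrix (ZMod q) (ZMod q) ℝ :=
  Matrix.of fun i j => if (j - σ i).val < (σ (i + 1) - σ i).val then (1 : ℝ) else 0

/-- A probability vector: non-negative components summing to `1`. -/
def IsProbVec (q : ℕ) [NeZero q] (v : ZMod q → ℝ) : Prop :=
  (∀ i, 0 ≤ v i) ∧ ∑ i, v i = 1

/-- The symmetry order of `σ`: the order of the stabilizer of `σ` in the rotation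
group `⟨ρ⟩` acting by conjugation. -/
def symOrder (q : ℕ) [NeZero q] (σ : Equiv.Perm (ZMod q)) : ℕ :=
  ((Finset.range q).filter fun j => rotPerm q ^ j * σ * (rotPerm q ^ j)⁻¹ = σ).card

/-- `F : ℝ → ℝ` is a lift of a degree `k` covering map of `ℝ/ℤ`:
a homeomorphism of `ℝ` with `F (t+1) = F t + k`. -/
def IsDegreeLift (k : ℕ) (F : ℝ → ℝ) : Prop :=
  Continuous F ∧ StrictMono F ∧ ∀ t, F (t + 1) = F t + k

/-- The fixed point of the circle map corresponding to `u` (a point with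
`F u - u ∈ ℤ`) is topologically repelling: `t ↦ F t - t` is strictly increasing
in a neighborhood of `u`. -/
def TopRepelling (F : ℝ → ℝ) (u : ℝ) : Prop :=
  ∃ ε > 0, StrictMonoOn (fun t => F t - t) (Set.Ioo (u - ε) (u + ε))

/-- `x : ZMod q → ℝ` is a period `q` orbit realizing `σ` for the circle map with
lift `F`: the points `x i` lie in `(0,1)` and are increasing with respect to the
representatives `{1, …, q}` (so that `0, x₁, …, x_q` are in positive cyclic
order), and on the circle `f(x i) = x (σ i)` for all `i`. -/
def IsRealization (q : ℕ) [NeZero q] (σ : Equiv.Perm (ZMod q))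
    (F : ℝ → ℝ) (x : ZMod q → ℝ) : Prop :=
  (∀ i, x i ∈ Set.Ioo (0 : ℝ) 1) ∧
  (∀ i j : ZMod q, rep q i < rep q j → x i < x j) ∧
  (∀ i, ∃ m : ℤ, F (x i) = x (σ i) + m)

/-- A realization of `σ` under the multiplication map `m_k : x ↦ kx (mod ℤ)`. -/
def MkRealization (q k : ℕ) [NeZero q] (σ : Equiv.Perm (ZMod q)) (x : ZMod q → ℝ) : Prop :=
  IsRealization q σ (fun t => (k : ℝ) * t) x

/-- The upper endpoint (as a real number) of the partition interval
`I i = [x i, x (i+1)]`; for `i = 0 ≡ q` the interval wraps around `0 ∈ ℝ/ℤ`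
and the endpoint is `x 1 + 1`. -/
def upperPt (q : ℕ) [NeZero q] (x : ZMod q → ℝ) (i : ZMod q) : ℝ :=
  if i = 0 then x 1 + 1 else x (i + 1)

/-- The `i`-th component of the fixed point distribution: the number of fixed
points of `m_k` (the points `j/(k-1) (mod ℤ)`) in the interior of the partition
interval `I i`. -/
def fixDist (q k : ℕ) [NeZero q] (x : ZMod q → ℝ) (i : ZMod q) : ℕ :=
  ((Finset.Icc 1 (2 * (k - 1))).filter fun j : ℕ =>
    x i < (j : ℝ) / ((k : ℝ) - 1) ∧ (j : ℝ) / ((k : ℝ) - 1) < upperPt q x i).card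

/-- The number of fixed points of `m_k` in the interval `(0, x 1)`. -/
def countFixBelow (q k : ℕ) [NeZero q] (x : ZMod q → ℝ) : ℕ :=
  ((Finset.range (k - 1)).filter fun j : ℕ =>
    0 < j ∧ (j : ℝ) / ((k : ℝ) - 1) < x 1).card

/-- The `m`-th component of the (cumulative) deployment vector: the number of
orbit points in `(0, m/(k-1))`. -/
def depCount (q k : ℕ) [NeZero q] (x : ZMod q → ℝ) (m : ℕ) : ℕ :=
  (Finset.univ.filter fun j : ZMod q => x j < (m : ℝ) / ((k : ℝ) - 1)).card

/-- The rank of a marked index `i` among the marked indices `i₁ < ⋯ < i_{d-1}`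
(ordered by their representatives in `{1, …, q}`). -/
def markRank (q : ℕ) [NeZero q] (σ : Equiv.Perm (ZMod q)) (i : ZMod q) : ℕ :=
  (Finset.univ.filter fun i' : ZMod q =>
    transMatrix q σ i' i' = 1 ∧ rep q i' ≤ rep q i).card

/-!
Writing `k x_i = x_{σ i} + m_i`, the digits `m_i ∈ [0, k)` of a realization `x` are
non-decreasing along the positions `1, …, q` and increase strictly across every descent of `σ`
at a position other than `q`. Conversely every such digit vector is realized exactly once, by
the periodic base-`k` expansion with digits `m_i, m_{σ i}, m_{σ² i}, …`: its points come in the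
right order because a pair ordered one way by position and the other way by `x` would stay so
under `σ`, which a `q`-cycle cannot sustain. Subtracting the forced increments turns the digit
vectors into the strictly increasing sequences of `q` numbers below `k - d' + q - 1`, where
`d' = d - a_q` counts the descents away from `q`.
-/

open Finset

lemma Fin.val_le_orderEmbedding {n N : ℕ} (e : Fin (n + 1) ↪o Fin N) (t : Fin (n + 1)) :
    (t : ℕ) ≤ e t := by
  induction t using Fin.induction with
  | zero => exact Nat.zero_le _
  | succ t ih =>
    have : (e t.castSucc : ℕ) < e t.succ := e.strictMono t.castSucc_lt_succ
    simp only [Fin.val_succ, Fin.val_castSucc] at ih ⊢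
    omega

lemma sum_range_le_of_step {n : ℕ} {c : ℕ → ℕ} {g : Fin (n + 1) → ℕ}
    (hg : ∀ t : Fin n, g t.castSucc + c t ≤ g t.succ) (t : Fin (n + 1)) :
    ∑ s ∈ range t, c s ≤ g t := by
  induction t using Fin.induction with
  | zero => simp
  | succ t ih =>
    rw [Fin.val_succ, sum_range_succ]
    have := hg t
    rw [Fin.val_castSucc] at ih
    omega

/-- Subtracting the forced increments and adding `t` turns a sequence whose steps are bounded
below by `c` into a strictly increasing one (and back). -/
theorem ncard_stepSequences (c : ℕ → ℕ) (K n : ℕ) :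
    {g : Fin (n + 1) → ℕ | (∀ t, g t < K) ∧ ∀ t : Fin n, g t.castSucc + c t ≤ g t.succ}.ncard
      = (K - ∑ s ∈ range n, c s + n).choose (n + 1) := by
  let ψ : (Fin (n + 1) ↪o Fin (K - ∑ s ∈ range n, c s + n)) → Fin (n + 1) → ℕ :=
    fun e t => e t + ∑ s ∈ range t, c s - t
  have hψ : Function.Injective ψ := by
    intro e e' h
    ext t
    have h1 := congrFun h t
    have h2 := Fin.val_le_orderEmbedding e t
    have h3 := Fin.val_le_orderEmbedding e' t
    simp only [ψ] at h1
    omega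
  have hrange : Set.range ψ =
      {g : Fin (n + 1) → ℕ | (∀ t, g t < K) ∧ ∀ t : Fin n, g t.castSucc + c t ≤ g t.succ} := by
    ext g
    constructor
    · rintro ⟨e, rfl⟩
      have hstep : ∀ t : Fin n, ψ e t.castSucc + c t ≤ ψ e t.succ := by
        intro t
        have h1 : (e t.castSucc : ℕ) < e t.succ := e.strictMono t.castSucc_lt_succ
        have h2 := Fin.val_le_orderEmbedding e t.castSucc
        simp only [ψ, Fin.val_succ, Fin.val_castSucc, sum_range_succ] at h1 h2 ⊢
        omega
      refine ⟨fun t => ?_, hstep⟩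
      have hmono : Monotone (ψ e) := Fin.monotone_iff_le_succ.2 fun t =>
        (Nat.le_add_right _ _).trans (hstep t)
      have h1 := hmono (Fin.le_last t)
      have h2 := Fin.val_le_orderEmbedding e (Fin.last n)
      have h3 := (e (Fin.last n)).isLt
      simp only [ψ, Fin.val_last] at h1 h2 ⊢
      omega
    · rintro ⟨hK, hstep⟩
      have hCg := sum_range_le_of_step hstep
      let u : Fin (n + 1) → ℕ := fun t => g t + t - ∑ s ∈ range t, c s
      have hu : StrictMono u := Fin.strictMono_iff_lt_succ.2 fun t => by
        have := hstep t
        have := hCg t.castSucc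
        simp only [u, Fin.val_succ, Fin.val_castSucc, sum_range_succ] at *
        omega
      have hN : ∀ t, u t < K - ∑ s ∈ range n, c s + n := fun t => by
        have h1 := hu.monotone (Fin.le_last t)
        have h2 := hK (Fin.last n)
        have h3 := hCg (Fin.last n)
        simp only [u, Fin.val_last] at h1 h3 ⊢
        omega
      refine ⟨OrderEmbedding.ofStrictMono (fun t => ⟨u t, hN t⟩) fun a b hab => hu hab, ?_⟩
      funext t
      have := hCg t
      show g t + t - ∑ s ∈ range t, c s + ∑ s ∈ range t, c s - t = g t
      omega
  rw [← hrange, Set.ncard_range_of_injective hψ,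
    Nat.card_congr Set.powersetCard.ofFinEmbEquiv, Set.powersetCard.card, Nat.card_eq_fintype_card,
    Fintype.card_fin]

section LinearRecursion

variable {α : Type*} {σ : Equiv.Perm α} {k : ℝ} {x y w : α → ℝ}

lemma eq_of_mul_eq_comp_add [Finite α] (hk : 1 < k) (hx : ∀ i, k * x i = x (σ i) + w i)
    (hy : ∀ i, k * y i = y (σ i) + w i) : x = y := by
  funext i
  have : Nonempty α := ⟨i⟩
  obtain ⟨i₀, hi₀⟩ := Finite.exists_max fun j => |x j - y j|
  have hmul : k * |x i₀ - y i₀| = |x (σ i₀) - y (σ i₀)| := by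
    rw [← abs_of_pos (zero_lt_one.trans hk), ← abs_mul, mul_sub, hx, hy, add_sub_add_right_eq_sub]
  have h₀ : |x i₀ - y i₀| = 0 := by nlinarith [hi₀ (σ i₀), abs_nonneg (x i₀ - y i₀)]
  have := hi₀ i
  rw [h₀] at this
  linarith [abs_nonpos_iff.1 this]

lemma le_one_of_mul_eq_comp_add [Finite α] (hk : 1 < k) (hx : ∀ i, k * x i = x (σ i) + w i)
    (hw : ∀ i, w i ≤ k - 1) (i : α) : x i ≤ 1 := by
  have : Nonempty α := ⟨i⟩
  obtain ⟨i₀, hi₀⟩ := Finite.exists_max x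
  have : x i₀ ≤ 1 := by nlinarith [hx i₀, hi₀ (σ i₀), hw i₀]
  exact (hi₀ i).trans this

lemma nonneg_of_mul_eq_comp_add [Finite α] (hk : 1 < k) (hx : ∀ i, k * x i = x (σ i) + w i)
    (hw : ∀ i, 0 ≤ w i) (i : α) : 0 ≤ x i := by
  have : Nonempty α := ⟨i⟩
  obtain ⟨i₀, hi₀⟩ := Finite.exists_min x
  have : 0 ≤ x i₀ := by nlinarith [hx i₀, hi₀ (σ i₀), hw i₀]
  exact this.trans (hi₀ i)

lemma Equiv.Perm.forall_of_transitive (hσ : ∀ i j, ∃ n : ℕ, (σ ^ n) i = j) {P : α → Prop}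
    (hP : ∀ i, P i → P (σ i)) {i : α} (hi : P i) (j : α) : P j := by
  obtain ⟨n, rfl⟩ := hσ i j
  induction n with
  | zero => exact hi
  | succ n ih => rw [pow_succ', Equiv.Perm.mul_apply]; exact hP _ ih

lemma lt_one_of_mul_eq_comp_add [Finite α] (hσ : ∀ i j, ∃ n : ℕ, (σ ^ n) i = j) (hk : 1 < k)
    (hx : ∀ i, k * x i = x (σ i) + w i) (hw : ∀ i, w i ≤ k - 1) {j : α} (hj : w j < k - 1)
    (i : α) : x i < 1 := by
  have hle := le_one_of_mul_eq_comp_add hk hx hw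
  refine (hle i).lt_of_ne fun h => ?_
  -- a point at `1` forces its image to `1` and its digit to `k - 1`
  have := Equiv.Perm.forall_of_transitive hσ (P := fun a => x a = 1)
    (fun a ha => le_antisymm (hle _) (by linarith [ha ▸ hx a, hw a])) h
  have hxj := hx j
  rw [this j, this (σ j)] at hxj
  linarith

lemma pos_of_mul_eq_comp_add [Finite α] (hσ : ∀ i j, ∃ n : ℕ, (σ ^ n) i = j) (hk : 1 < k)
    (hx : ∀ i, k * x i = x (σ i) + w i) (hw : ∀ i, 0 ≤ w i) {j : α} (hj : 0 < w j)
    (i : α) : 0 < x i := by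
  have hge := nonneg_of_mul_eq_comp_add hk hx hw
  refine (hge i).lt_of_ne' fun h => ?_
  have := Equiv.Perm.forall_of_transitive hσ (P := fun a => x a = 0)
    (fun a ha => le_antisymm (by linarith [ha ▸ hx a, hw a]) (hge _)) h
  have hxj := hx j
  rw [this j, this (σ j)] at hxj
  linarith

/-- The point with periodic base-`k` digits `w i, w (σ i), w (σ² i), …`, for `σ ^ p = 1`. -/
def periodicExpansion (k : ℝ) (p : ℕ) (σ : Equiv.Perm α) (w : α → ℝ) (i : α) : ℝ :=
  (∑ j ∈ range p, w ((σ ^ j) i) * k ^ (p - 1 - j)) / (k ^ p - 1)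

lemma mul_periodicExpansion {p : ℕ} (hk : 1 < k) (hp : 0 < p) (hσ : σ ^ p = 1) (i : α) :
    k * periodicExpansion k p σ w i = periodicExpansion k p σ w (σ i) + w i := by
  obtain ⟨n, rfl⟩ : ∃ n, p = n + 1 := ⟨p - 1, by omega⟩
  have hkp : k ^ (n + 1) - 1 ≠ 0 := (sub_pos.2 (one_lt_pow₀ hk n.succ_ne_zero)).ne'
  have hshift : ∀ j, (σ ^ j) (σ i) = (σ ^ (j + 1)) i := fun j => by
    rw [pow_succ, Equiv.Perm.mul_apply]
  unfold periodicExpansion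
  rw [Nat.add_sub_cancel, mul_div_assoc', div_add' _ _ _ hkp, div_left_inj' hkp,
    sum_range_succ', sum_range_succ, mul_add, mul_sum]
  simp only [hshift, hσ, pow_zero, Nat.sub_zero, Nat.sub_self, Equiv.Perm.coe_one, id]
  have : ∀ j ∈ range n, k * (w ((σ ^ (j + 1)) i) * k ^ (n - (j + 1))) =
      w ((σ ^ (j + 1)) i) * k ^ (n - j) := fun j hj => by
    rw [mem_range] at hj
    rw [show n - j = n - (j + 1) + 1 by omega, pow_succ]; ring
  rw [sum_congr rfl this]
  ring

end LinearRecursion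

section Rep

variable {q : ℕ} [NeZero q]

lemma rep_zero : rep q 0 = q := if_pos rfl

lemma rep_natCast {p : ℕ} (h1 : 1 ≤ p) (h2 : p ≤ q) : rep q (p : ZMod q) = p := by
  rcases h2.eq_or_lt with rfl | h2
  · simp [rep]
  · have : (p : ZMod q) ≠ 0 := by
      rw [Ne, ZMod.natCast_eq_zero_iff]
      exact fun h => absurd (Nat.le_of_dvd (by omega) h) (by omega)
    rw [rep, if_neg this, ZMod.val_natCast_of_lt h2]

lemma natCast_rep (i : ZMod q) : ((rep q i : ℕ) : ZMod q) = i := by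
  unfold rep; split_ifs with h
  · simp [h]
  · simp

lemma rep_injective : Function.Injective (rep q) :=
  Function.LeftInverse.injective natCast_rep

lemma one_le_rep (i : ZMod q) : 1 ≤ rep q i := by
  unfold rep; split_ifs with h
  · exact NeZero.one_le
  · exact Nat.one_le_iff_ne_zero.2 ((ZMod.val_ne_zero i).2 h)

lemma rep_le (i : ZMod q) : rep q i ≤ q := by
  unfold rep; split_ifs
  · exact le_rfl
  · exact (ZMod.val_lt i).le

lemma rep_lt_iff_ne_zero {i : ZMod q} : rep q i < q ↔ i ≠ 0 := by
  refine ⟨fun h h0 => by simp [h0, rep_zero] at h, fun hi => (rep_le i).lt_of_ne fun h => hi ?_⟩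
  exact rep_injective (h.trans rep_zero.symm)

lemma rep_add_one {i : ZMod q} (hi : i ≠ 0) : rep q (i + 1) = rep q i + 1 := by
  have := rep_lt_iff_ne_zero.2 hi
  conv_lhs => rw [← natCast_rep i, ← Nat.cast_succ]
  exact rep_natCast (by omega) this

lemma rep_induction {P : ZMod q → Prop} {i : ZMod q} (hi : P i)
    (hstep : ∀ j, j ≠ 0 → rep q i ≤ rep q j → P j → P (j + 1)) :
    ∀ j, rep q i ≤ rep q j → P j := by
  suffices h : ∀ p, rep q i ≤ p → p ≤ q → P (p : ZMod q) from
    fun j hj => natCast_rep j ▸ h _ hj (rep_le j)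
  intro p hp
  induction p, hp using Nat.le_induction with
  | base => exact fun _ => (natCast_rep i).symm ▸ hi
  | succ p hp ih =>
    intro hpq
    have hrep : rep q (p : ZMod q) = p := rep_natCast ((one_le_rep i).trans hp) (by omega)
    have hne : (p : ZMod q) ≠ 0 := rep_lt_iff_ne_zero.1 (by omega)
    rw [Nat.cast_succ]
    exact hstep _ hne (by rw [hrep]; exact hp) (ih (by omega))

end Rep

section Digits

variable {q k : ℕ} [NeZero q] {σ : Equiv.Perm (ZMod q)} {m : ZMod q → ℕ}

def descentInd (q : ℕ) [NeZero q] (σ : Equiv.Perm (ZMod q)) (i : ZMod q) : ℕ :=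
  if rep q (σ (i + 1)) < rep q (σ i) then 1 else 0

lemma desNum_eq_sum : desNum q σ = ∑ i, descentInd q σ i :=
  Finset.card_filter _ _

/-- The digit vectors `m i = k x i - x (σ i)` of the realizations `x`. -/
def IsAdmissibleDigits (q k : ℕ) [NeZero q] (σ : Equiv.Perm (ZMod q)) (m : ZMod q → ℕ) : Prop :=
  (∀ i, m i < k) ∧ ∀ i, i ≠ 0 → m i + descentInd q σ i ≤ m (i + 1)

lemma val_neg_lt_val_sub_iff {u v : ZMod q} (huv : u ≠ v) :
    (0 - u).val < (v - u).val ↔ rep q v < rep q u := by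
  rcases eq_or_ne u 0 with rfl | hu
  · simp [rep_zero, rep_lt_iff_ne_zero, ZMod.val_pos, huv.symm]
  have hneg : (-u).val = q - u.val := by rw [ZMod.neg_val, if_neg hu]
  have hu0 : 0 < u.val := ZMod.val_pos.2 hu
  have huv' : u.val ≠ v.val := fun h => huv (ZMod.val_injective q h)
  have hu' := ZMod.val_lt u
  have hv' := ZMod.val_lt v
  have hvu := ZMod.val_lt (v - u)
  have hsub : (v - u).val = v.val + (-u).val ∨ (v - u).val + q = v.val + (-u).val := by
    rw [sub_eq_add_neg]
    rcases lt_or_ge (v.val + (-u).val) q with h | h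
    · exact Or.inl (ZMod.val_add_of_lt h)
    · exact Or.inr (ZMod.val_add_val_of_le h).symm
  rw [zero_sub, hneg] at *
  unfold rep
  rw [if_neg hu]
  split_ifs with hv0
  · subst hv0
    simp only [ZMod.val_zero] at hsub huv' ⊢
    omega
  · have := ZMod.val_pos.2 hv0
    omega

lemma transMatrix_zero_zero (hq : 2 ≤ q) (σ : Equiv.Perm (ZMod q)) :
    transMatrix q σ 0 0 = descentInd q σ 0 := by
  have : Nontrivial (ZMod q) := ZMod.nontrivial_iff.2 (by omega)
  have huv : σ 0 ≠ σ (0 + 1) := by simp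
  unfold transMatrix descentInd
  rw [Matrix.of_apply, if_congr (val_neg_lt_val_sub_iff huv) rfl rfl]
  split_ifs <;> simp

namespace IsAdmissibleDigits

lemma le_of_rep_le (hm : IsAdmissibleDigits q k σ m) {i j : ZMod q} (hij : rep q i ≤ rep q j) :
    m i ≤ m j :=
  rep_induction (P := fun j => m i ≤ m j) le_rfl
    (fun j hj _ h => h.trans (le_of_add_le_left (hm.2 j hj))) j hij

lemma lt_or_rep_le (hm : IsAdmissibleDigits q k σ m) {i j : ZMod q} (hij : rep q i ≤ rep q j) :
    m i < m j ∨ rep q (σ i) ≤ rep q (σ j) := by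
  refine rep_induction (P := fun j => m i < m j ∨ rep q (σ i) ≤ rep q (σ j)) (Or.inr le_rfl)
    (fun j hj hij h => ?_) j hij
  have hstep := hm.2 j hj
  unfold descentInd at hstep
  split_ifs at hstep with hdesc
  · exact Or.inl ((hm.le_of_rep_le hij).trans_lt (by omega))
  · exact h.imp (fun h => by omega) (fun h => h.trans (not_lt.1 hdesc))

end IsAdmissibleDigits

lemma exists_descent_ne_zero (hq : 2 ≤ q) (hσ : IsQCycle q σ) :
    ∃ i ≠ 0, descentInd q σ i = 1 := by
  have : Nontrivial (ZMod q) := ZMod.nontrivial_iff.2 (by omega)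
  by_contra! h
  have hasc : ∀ j, j ≠ 0 → rep q (σ j) < rep q (σ (j + 1)) := fun j hj => by
    have hj1 := h j hj
    unfold descentInd at hj1
    refine lt_of_le_of_ne (not_lt.1 fun hlt => hj1 (if_pos hlt)) fun he => ?_
    exact one_ne_zero (α := ZMod q) (by simpa using σ.injective (rep_injective he))
  have hrep1 : rep q (1 : ZMod q) = 1 := by exact_mod_cast rep_natCast (q := q) le_rfl (by omega)
  have hle : ∀ j, rep q 1 ≤ rep q j → rep q j ≤ rep q (σ j) :=
    rep_induction (hrep1 ▸ one_le_rep _) fun j hj _ h => by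
      rw [rep_add_one hj]; exact (Nat.succ_le_succ h).trans (hasc j hj)
  have hfix : σ 0 = 0 := rep_injective <| by
    have := hle 0 (by rw [hrep1]; exact one_le_rep 0)
    have := rep_le (σ 0)
    rw [rep_zero] at *
    omega
  obtain ⟨n, hn⟩ := hσ 0 1
  exact one_ne_zero (hn.symm.trans (Equiv.Perm.pow_apply_eq_self_of_apply_eq_self hfix n))

end Digits

section Realizations

variable {q k : ℕ} [NeZero q] {σ : Equiv.Perm (ZMod q)} {m : ZMod q → ℕ} {x : ZMod q → ℝ}

namespace IsAdmissibleDigits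

lemma exists_add_one_lt_and_pos (hq : 2 ≤ q) (hσ : IsQCycle q σ)
    (hm : IsAdmissibleDigits q k σ m) : ∃ i, m i + 1 < k ∧ 0 < m (i + 1) := by
  obtain ⟨i, hi, hdesc⟩ := exists_descent_ne_zero hq hσ
  have := hm.2 i hi
  have := hm.1 (i + 1)
  exact ⟨i, by omega, by omega⟩

lemma one_lt (hq : 2 ≤ q) (hσ : IsQCycle q σ) (hm : IsAdmissibleDigits q k σ m) : 1 < k := by
  obtain ⟨i, hi, -⟩ := hm.exists_add_one_lt_and_pos hq hσ
  omega

/-- The digits of such a pair must agree, so `σ` cannot reverse its `rep`-order. -/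
lemma rep_apply_lt_of_le (hm : IsAdmissibleDigits q k σ m)
    (hx : ∀ i, (k : ℝ) * x i = x (σ i) + m i) (hx01 : ∀ i, x i ∈ Set.Ioo (0 : ℝ) 1)
    {i j : ZMod q} (hij : rep q i < rep q j) (hji : x j ≤ x i) :
    rep q (σ i) < rep q (σ j) ∧ x (σ j) ≤ x (σ i) := by
  have hkx : (k : ℝ) * x j ≤ k * x i := mul_le_mul_of_nonneg_left hji k.cast_nonneg
  have hmij : m i = m j := by
    refine le_antisymm (hm.le_of_rep_le hij.le) (not_lt.1 fun hlt => ?_)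
    have : (m i : ℝ) + 1 ≤ m j := by exact_mod_cast hlt
    linarith [hx i, hx j, (hx01 (σ i)).2, (hx01 (σ j)).1]
  have hle := (hm.lt_or_rep_le hij.le).resolve_left hmij.not_lt
  have hmij' : (m i : ℝ) = m j := by rw [hmij]
  refine ⟨hle.lt_of_ne fun h => hij.ne ?_, by linarith [hx i, hx j]⟩
  rw [σ.injective (rep_injective h)]

end IsAdmissibleDigits

lemma exists_rep_pow_le (hσ : IsQCycle q σ) (i j : ZMod q) :
    ∃ n, rep q ((σ ^ n) j) ≤ rep q ((σ ^ n) i) := by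
  by_contra! h
  obtain ⟨t, rfl⟩ := hσ i j
  -- `r n = rep (σ^(n t) i)` would be strictly increasing, yet bounded by `q`
  have hr : StrictMono fun n => rep q ((σ ^ (n * t)) i) := strictMono_nat_of_lt_succ fun n => by
    simpa [← Equiv.Perm.mul_apply, ← pow_add, add_mul, add_comm] using h (n * t)
  have := hr.id_le (q + 1)
  have := rep_le ((σ ^ ((q + 1) * t)) i)
  simp only [id] at *
  omega

lemma IsAdmissibleDigits.lt_of_rep_lt (hσ : IsQCycle q σ) (hm : IsAdmissibleDigits q k σ m)
    (hx : ∀ i, (k : ℝ) * x i = x (σ i) + m i) (hx01 : ∀ i, x i ∈ Set.Ioo (0 : ℝ) 1)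
    {i j : ZMod q} (hij : rep q i < rep q j) : x i < x j := by
  by_contra! hji
  have hpow : ∀ n, rep q ((σ ^ n) i) < rep q ((σ ^ n) j) ∧ x ((σ ^ n) j) ≤ x ((σ ^ n) i) := by
    intro n
    induction n with
    | zero => exact ⟨hij, hji⟩
    | succ n ih =>
      simpa only [pow_succ', Equiv.Perm.mul_apply] using
        hm.rep_apply_lt_of_le hx hx01 ih.1 ih.2
  obtain ⟨n, hn⟩ := exists_rep_pow_le hσ i j
  exact (hpow n).1.not_ge hn

lemma mkRealization_periodicExpansion (hq : 2 ≤ q) (hσ : IsQCycle q σ)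
    (hm : IsAdmissibleDigits q k σ m) :
    MkRealization q k σ (periodicExpansion k (orderOf σ) σ fun i => (m i : ℝ)) := by
  set X := periodicExpansion k (orderOf σ) σ fun i => (m i : ℝ)
  have hk : (1 : ℝ) < k := by exact_mod_cast hm.one_lt hq hσ
  have hX : ∀ i, (k : ℝ) * X i = X (σ i) + m i :=
    mul_periodicExpansion hk (orderOf_pos σ) (pow_orderOf_eq_one σ)
  have hw : ∀ i, (m i : ℝ) ≤ k - 1 := fun i => by
    have : (m i : ℝ) + 1 ≤ k := by exact_mod_cast hm.1 i
    linarith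
  obtain ⟨i₀, hlt, hpos⟩ := hm.exists_add_one_lt_and_pos hq hσ
  have hX01 : ∀ i, X i ∈ Set.Ioo (0 : ℝ) 1 := fun i =>
    ⟨pos_of_mul_eq_comp_add hσ hk hX (fun j => Nat.cast_nonneg _) (j := i₀ + 1)
        (by exact_mod_cast hpos) i,
      lt_one_of_mul_eq_comp_add hσ hk hX hw (j := i₀)
        (by have : (m i₀ : ℝ) + 1 < k := by exact_mod_cast hlt
            linarith) i⟩
  exact ⟨hX01, fun i j hij => hm.lt_of_rep_lt hσ hX hX01 hij,
    fun i => ⟨m i, by push_cast; exact hX i⟩⟩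

lemma exists_nat_digit {a b : ℝ} (ha : a ∈ Set.Ioo (0 : ℝ) 1) (hb : b ∈ Set.Ioo (0 : ℝ) 1)
    {z : ℤ} (h : (k : ℝ) * a = b + z) : ∃ d : ℕ, d < k ∧ (k : ℝ) * a = b + d := by
  have hk : (0 : ℝ) ≤ k := k.cast_nonneg
  have hz0 : (-1 : ℝ) < z := by nlinarith [ha.1, hb.2]
  have hzk : (z : ℝ) < k := by nlinarith [ha.2, hb.1]
  lift z to ℕ using by exact_mod_cast (show (-1 : ℤ) < z by exact_mod_cast hz0)
  exact ⟨z, by exact_mod_cast hzk, by exact_mod_cast h⟩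

lemma MkRealization.exists_isAdmissibleDigits (hx : MkRealization q k σ x) :
    ∃ m, IsAdmissibleDigits q k σ m ∧ ∀ i, (k : ℝ) * x i = x (σ i) + m i := by
  obtain ⟨hx01, hmono, hdig⟩ := hx
  choose m hmk hm using fun i => exists_nat_digit (hx01 i) (hx01 (σ i)) (hdig i).choose_spec
  refine ⟨m, ⟨hmk, fun i hi => ?_⟩, hm⟩
  have hk : (0 : ℝ) < k := by exact_mod_cast (Nat.zero_le _).trans_lt (hmk i)
  have hxi : (k : ℝ) * x i < k * x (i + 1) :=
    mul_lt_mul_of_pos_left (hmono _ _ (by rw [rep_add_one hi]; omega)) hk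
  have hstep := hm (i + 1)
  unfold descentInd
  split_ifs with hdesc
  · have : (m i : ℝ) < m (i + 1) := by linarith [hm i, hmono _ _ hdesc]
    exact_mod_cast this
  · have : (m i : ℝ) < m (i + 1) + 1 := by linarith [hm i, (hx01 (σ i)).1, (hx01 (σ (i + 1))).2]
    have : m i < m (i + 1) + 1 := by exact_mod_cast this
    omega

/-- A realization is the periodic expansion of its digit vector, which determines it. -/
theorem ncard_mkRealization (hq : 2 ≤ q) (hσ : IsQCycle q σ) :
    {x | MkRealization q k σ x}.ncard = {m | IsAdmissibleDigits q k σ m}.ncard := by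
  let X : (ZMod q → ℕ) → ZMod q → ℝ := fun m =>
    periodicExpansion k (orderOf σ) σ fun i => (m i : ℝ)
  have hX : ∀ m, IsAdmissibleDigits q k σ m → ∀ i, (k : ℝ) * X m i = X m (σ i) + m i :=
    fun m hm => mul_periodicExpansion (by exact_mod_cast hm.one_lt hq hσ) (orderOf_pos σ)
      (pow_orderOf_eq_one σ)
  have himage : X '' {m | IsAdmissibleDigits q k σ m} = {x | MkRealization q k σ x} := by
    ext x
    refine ⟨?_, fun hx => ?_⟩
    · rintro ⟨m, hm, rfl⟩
      exact mkRealization_periodicExpansion hq hσ hm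
    · obtain ⟨m, hm, hxm⟩ := hx.exists_isAdmissibleDigits
      exact ⟨m, hm, eq_of_mul_eq_comp_add (by exact_mod_cast hm.one_lt hq hσ) (hX m hm) hxm⟩
  rw [← himage]
  refine Set.InjOn.ncard_image fun m hm m' hm' h => ?_
  funext i
  have := hX m hm i
  have := hX m' hm' i
  have : (m i : ℝ) = m' i := by
    rw [show X m = X m' from h] at *
    linarith
  exact_mod_cast this

end Realizations

section Positions

variable {n k : ℕ} {σ : Equiv.Perm (ZMod (n + 1))}

/-- `t ↦ t + 1` identifies `Fin (n + 1)` with `ZMod (n + 1)` ordered by `rep`. -/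
def positionEquiv (n : ℕ) : Fin (n + 1) ≃ ZMod (n + 1) where
  toFun t := ((t + 1 : ℕ) : ZMod (n + 1))
  invFun i := ⟨rep (n + 1) i - 1, by have := rep_le i; have := one_le_rep i; omega⟩
  left_inv t := by ext; simp only; rw [rep_natCast (by omega) (by omega)]; omega
  right_inv i := by
    simp only
    rw [Nat.sub_add_cancel (one_le_rep i), natCast_rep]

lemma positionEquiv_castSucc_ne_zero (t : Fin n) : positionEquiv n t.castSucc ≠ 0 :=
  rep_lt_iff_ne_zero.1 (by
    rw [positionEquiv, Equiv.coe_fn_mk, rep_natCast (by omega) (by simp)]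
    simp)

lemma positionEquiv_succ (t : Fin n) :
    positionEquiv n t.succ = positionEquiv n t.castSucc + 1 := by
  simp [positionEquiv]

lemma positionEquiv_last : positionEquiv n (Fin.last n) = 0 := by
  simp [positionEquiv]

lemma isAdmissibleDigits_iff {m : ZMod (n + 1) → ℕ} :
    IsAdmissibleDigits (n + 1) k σ m ↔ (∀ t, m (positionEquiv n t) < k) ∧
      ∀ t : Fin n, m (positionEquiv n t.castSucc) + descentInd (n + 1) σ ((t + 1 : ℕ))
        ≤ m (positionEquiv n t.succ) := by
  unfold IsAdmissibleDigits
  simp only [(positionEquiv n).surjective.forall, Fin.forall_fin_succ' (n := n),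
    positionEquiv_last, positionEquiv_succ, ne_eq, not_true_eq_false, IsEmpty.forall_iff,
    and_true, positionEquiv_castSucc_ne_zero, not_false_eq_true, forall_const]
  rfl

lemma ncard_isAdmissibleDigits :
    {m | IsAdmissibleDigits (n + 1) k σ m}.ncard
      = (k - ∑ t ∈ range n, descentInd (n + 1) σ ((t + 1 : ℕ)) + n).choose (n + 1) := by
  have hpre : {m | IsAdmissibleDigits (n + 1) k σ m} = (· ∘ positionEquiv n) ⁻¹'
      {g | (∀ t, g t < k) ∧ ∀ t : Fin n,
        g t.castSucc + descentInd (n + 1) σ ((t + 1 : ℕ)) ≤ g t.succ} := by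
    ext m
    exact isAdmissibleDigits_iff
  rw [hpre, Set.ncard_preimage_of_injective_subset_range
    (positionEquiv n).surjective.injective_comp_right
    fun g _ => ⟨g ∘ (positionEquiv n).symm, by simp [Function.comp_assoc]⟩,
    ncard_stepSequences (fun t => descentInd (n + 1) σ ((t + 1 : ℕ))) k n]

lemma desNum_eq_sum_add :
    desNum (n + 1) σ
      = ∑ t ∈ range n, descentInd (n + 1) σ ((t + 1 : ℕ)) + descentInd (n + 1) σ 0 := by
  rw [desNum_eq_sum, ← (positionEquiv n).sum_comp, Fin.sum_univ_castSucc, positionEquiv_last,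
    ← Fin.sum_univ_eq_sum_range]
  rfl

end Positions

/-- Let `σ` be a `q`-cycle with `des σ = d` and signature `(a₁, …, a_q)`, and let
`k > d`. The number of realizations of `σ` under `m_k` is `C(q+k-d, q)` if
`a_q = 1` and `C(q+k-d-1, q)` if `a_q = 0` (here `a_q` is the diagonal entry of
the transition matrix at the index `q ≡ 0`). -/
theorem realization_count (q d k : ℕ) [NeZero q] (hq : 2 ≤ q)
    (σ : Equiv.Perm (ZMod q)) (hσ : IsQCycle q σ) (hd : desNum q σ = d)
    (hk : d < k) :
    (transMatrix q σ 0 0 = 1 →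
      {x : ZMod q → ℝ | MkRealization q k σ x}.ncard = Nat.choose (q + k - d) q) ∧
    (transMatrix q σ 0 0 = 0 →
      {x : ZMod q → ℝ | MkRealization q k σ x}.ncard
        = Nat.choose (q + k - d - 1) q) := by
  obtain ⟨n, rfl⟩ : ∃ n, q = n + 1 := ⟨q - 1, by omega⟩
  rw [desNum_eq_sum_add] at hd
  rw [transMatrix_zero_zero hq, ncard_mkRealization hq hσ, ncard_isAdmissibleDigits]
  have hdesc0 : descentInd (n + 1) σ 0 ≤ 1 := by unfold descentInd; split_ifs <;> simp
  constructor <;> intro h <;> congr 1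
  · have : descentInd (n + 1) σ 0 = 1 := by exact_mod_cast h
    omega
  · have : descentInd (n + 1) σ 0 = 0 := by exact_mod_cast h
    omega
end
end

section
/- For every integer k ≥ 2, every rotation cycle in 𝒞_q (i.e., every σ = ρ^p with 1 ≤ p < q and gcd(p,q) = 1) has exactly C(q+k−2, q) realizations under m_k. -/
open scoped Classical

noncomputable section

namespace RotCount

open Finset

variable {q k p : ℕ} [NeZero q]

/-! ### Generic nat lemmas -/

set_option linter.unusedSectionVars false

lemma geom_aux (k : ℕ) (hk : 1 ≤ k) (n : ℕ) :
    (∑ u ∈ Finset.range n, (k - 1) * k ^ u) + 1 = k ^ n := by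
  obtain ⟨K, rfl⟩ : ∃ K, k = K + 1 := ⟨k - 1, by omega⟩
  simp only [Nat.add_sub_cancel]
  induction n with
  | zero => simp
  | succ n ih =>
    rw [Finset.sum_range_succ, pow_succ]
    calc (∑ u ∈ Finset.range n, K * (K+1) ^ u) + K * (K+1) ^ n + 1
        = ((∑ u ∈ Finset.range n, K * (K+1) ^ u) + 1) + K * (K+1) ^ n := by ring
      _ = (K+1) ^ n + K * (K+1) ^ n := by rw [ih]
      _ = (K+1) ^ n * (K+1) := by ring

/-! ### rep and ZMod lemmas -/

lemma rep_pos (i : ZMod q) : 1 ≤ rep q i := by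
  unfold rep
  split
  · exact Nat.one_le_iff_ne_zero.2 (NeZero.ne q)
  · next h => exact Nat.one_le_iff_ne_zero.2 (fun h0 => h (by rwa [ZMod.val_eq_zero] at h0))

lemma rep_le (i : ZMod q) : rep q i ≤ q := by
  unfold rep
  split
  · exact le_rfl
  · exact (ZMod.val_lt i).le

lemma rep_lt_of_ne {i : ZMod q} (h : i ≠ 0) : rep q i < q := by
  unfold rep
  rw [if_neg h]
  exact ZMod.val_lt i

lemma rep_cast (i : ZMod q) : ((rep q i : ℕ) : ZMod q) = i := by
  unfold rep
  split
  · next h => simp [h]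
  · simp [ZMod.natCast_val, ZMod.cast_id]

lemma rep_succ (hq : 2 ≤ q) {i : ZMod q} (hi : i ≠ 0) :
    rep q (i + 1) = rep q i + 1 := by
  haveI : Fact (1 < q) := ⟨by omega⟩
  have hcast : ((i.val : ℕ) : ZMod q) = i := by simp [ZMod.natCast_val, ZMod.cast_id]
  by_cases h1 : i + 1 = 0
  · have hval : i.val = q - 1 := by
      have hneg : i = -1 := eq_neg_of_add_eq_zero_left h1
      rw [hneg, ZMod.neg_val, if_neg (one_ne_zero), ZMod.val_one]
    unfold rep
    rw [if_pos h1, if_neg hi, hval]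
    omega
  · have hlt : i.val + 1 < q := by
      rcases Nat.lt_or_ge (i.val + 1) q with h | h
      · exact h
      · exfalso
        have hvq : i.val + 1 = q := by have := ZMod.val_lt i; omega
        apply h1
        have h2 : i + 1 = ((i.val + 1 : ℕ) : ZMod q) := by push_cast [hcast]; ring
        rw [h2, hvq, ZMod.natCast_self]
    unfold rep
    rw [if_neg h1, if_neg hi]
    have hv1 : (1 : ZMod q).val = 1 := ZMod.val_one q
    have := ZMod.val_add_of_lt (a := i) (b := 1) (by rw [hv1]; exact hlt)
    rw [this, hv1]

lemma rep_cast_succ (hq : 2 ≤ q) {s : ℕ} (hs : s < q) :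
    rep q ((s + 1 : ℕ) : ZMod q) = s + 1 := by
  by_cases h : s + 1 = q
  · rw [h, ZMod.natCast_self]
    unfold rep
    rw [if_pos rfl]
  · have h2 : s + 1 < q := by omega
    have hv : ((s + 1 : ℕ) : ZMod q).val = s + 1 := ZMod.val_cast_of_lt h2
    have hne : ((s + 1 : ℕ) : ZMod q) ≠ 0 := by
      intro h0
      rw [h0] at hv
      simp at hv
    unfold rep
    rw [if_neg hne, hv]

lemma rot_pow (n : ℕ) (i : ZMod q) : (rotPerm q ^ n) i = i + (n : ℕ) := by
  induction n with
  | zero => simp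
  | succ n ih =>
    rw [pow_succ']
    have : (rotPerm q * rotPerm q ^ n) i = rotPerm q ((rotPerm q ^ n) i) := rfl
    rw [this, ih]
    show (i + (n : ZMod q)) + 1 = i + ((n + 1 : ℕ) : ZMod q)
    push_cast
    ring

lemma exists_t (hcop : Nat.Coprime p q) (i : ZMod q) :
    ∃ t : ℕ, t < q ∧ i + ((t * p : ℕ) : ZMod q) = 0 ∧
      (∀ s : ℕ, s < q → i + ((s * p : ℕ) : ZMod q) = 0 → s = t) ∧
      (i ≠ 0 → 1 ≤ t) := by
  set u : (ZMod q)ˣ := ZMod.unitOfCoprime p hcop with hu_def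
  have hu : (u : ZMod q) = (p : ZMod q) := ZMod.coe_unitOfCoprime p hcop
  set t : ℕ := ((-i) * ((u⁻¹ : (ZMod q)ˣ) : ZMod q)).val with ht_def
  have htq : t < q := ZMod.val_lt _
  have hcast : ((t : ℕ) : ZMod q) = (-i) * ((u⁻¹ : (ZMod q)ˣ) : ZMod q) := by
    rw [ht_def]; simp [ZMod.natCast_val, ZMod.cast_id]
  have hkey : ((t * p : ℕ) : ZMod q) = -i := by
    push_cast [hcast]
    rw [← hu, mul_assoc, Units.inv_mul, mul_one]
  refine ⟨t, htq, by rw [hkey]; ring, ?_, ?_⟩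
  · intro s hs hsum
    have hsp : ((s * p : ℕ) : ZMod q) = ((t * p : ℕ) : ZMod q) := by
      rw [hkey]
      rw [eq_neg_of_add_eq_zero_right hsum]
    have hst : ((s : ℕ) : ZMod q) = ((t : ℕ) : ZMod q) := by
      have h2 : ((s : ℕ) : ZMod q) * (p : ZMod q) = ((t : ℕ) : ZMod q) * (p : ZMod q) := by
        push_cast at hsp
        exact hsp
      calc ((s : ℕ) : ZMod q) = ((s : ℕ) : ZMod q) * ((u : ZMod q) * ((u⁻¹ : (ZMod q)ˣ) : ZMod q)) := by
            rw [Units.mul_inv, mul_one]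
        _ = (((s : ℕ) : ZMod q) * (p : ZMod q)) * ((u⁻¹ : (ZMod q)ˣ) : ZMod q) := by rw [hu]; ring
        _ = (((t : ℕ) : ZMod q) * (p : ZMod q)) * ((u⁻¹ : (ZMod q)ˣ) : ZMod q) := by rw [h2]
        _ = ((t : ℕ) : ZMod q) * ((u : ZMod q) * ((u⁻¹ : (ZMod q)ˣ) : ZMod q)) := by rw [hu]; ring
        _ = ((t : ℕ) : ZMod q) := by rw [Units.mul_inv, mul_one]
    calc s = ((s : ℕ) : ZMod q).val := (ZMod.val_cast_of_lt hs).symm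
      _ = ((t : ℕ) : ZMod q).val := by rw [hst]
      _ = t := ZMod.val_cast_of_lt htq
  · intro hi
    by_contra hc
    have ht0 : t = 0 := by omega
    apply hi
    have : ((t * p : ℕ) : ZMod q) = 0 := by rw [ht0]; simp
    rw [this] at hkey
    exact neg_eq_zero.mp hkey.symm

/-! ### digits, numerators -/

def Cond (q p : ℕ) [NeZero q] (m : ZMod q → ℕ) : Prop :=
  (∀ i : ZMod q, i ≠ 0 → m i ≤ m (i + 1)) ∧
  m (-(p : ZMod q)) < m (-(p : ZMod q) + 1)

def num (q k p : ℕ) [NeZero q] (m : ZMod q → ℕ) (i : ZMod q) : ℕ :=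
  ∑ t ∈ Finset.range q, m (i + ((t * p : ℕ) : ZMod q)) * k ^ (q - 1 - t)

lemma num_rec (hq : 1 ≤ q) (m : ZMod q → ℕ) (i : ZMod q) :
    k * num q k p m i + m i = num q k p m (i + (p : ZMod q)) + m i * k ^ q := by
  obtain ⟨Q, hQ⟩ : ∃ Q, q = Q + 1 := ⟨q - 1, by omega⟩
  have e1 : k * num q k p m i
      = ∑ t ∈ Finset.range q, m (i + ((t * p : ℕ) : ZMod q)) * k ^ (q - t) := by
    rw [num, Finset.mul_sum]
    refine Finset.sum_congr rfl fun t ht => ?_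
    rw [Finset.mem_range] at ht
    have he : q - 1 - t + 1 = q - t := by omega
    rw [← he, pow_succ]
    ring
  have e2 : ∑ t ∈ Finset.range q, m (i + ((t * p : ℕ) : ZMod q)) * k ^ (q - t)
      = (∑ t ∈ Finset.range Q, m (i + (((t+1) * p : ℕ) : ZMod q)) * k ^ (q - (t+1)))
        + m i * k ^ q := by
    rw [show Finset.range q = Finset.range (Q + 1) from by rw [hQ], Finset.sum_range_succ']
    simp
  have e3 : ∑ t ∈ Finset.range Q, m (i + (((t+1) * p : ℕ) : ZMod q)) * k ^ (q - (t+1))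
      = ∑ t ∈ Finset.range Q, m ((i + (p : ZMod q)) + ((t * p : ℕ) : ZMod q)) * k ^ (q - 1 - t) := by
    refine Finset.sum_congr rfl fun t ht => ?_
    rw [Finset.mem_range] at ht
    have hidx : i + (((t+1) * p : ℕ) : ZMod q) = (i + (p : ZMod q)) + ((t * p : ℕ) : ZMod q) := by
      push_cast
      ring
    have hexp : q - (t+1) = q - 1 - t := by omega
    rw [hidx, hexp]
  have e4 : num q k p m (i + (p : ZMod q))
      = (∑ t ∈ Finset.range Q, m ((i + (p : ZMod q)) + ((t * p : ℕ) : ZMod q)) * k ^ (q - 1 - t))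
        + m i := by
    rw [num, show Finset.range q = Finset.range (Q + 1) from by rw [hQ],
      Finset.sum_range_succ]
    congr 1
    have hidx : (i + (p : ZMod q)) + ((Q * p : ℕ) : ZMod q) = i := by
      have hqp : ((p : ℕ) + Q * p : ℕ) = q * p := by rw [hQ]; ring
      have : (p : ZMod q) + ((Q * p : ℕ) : ZMod q) = ((q * p : ℕ) : ZMod q) := by
        rw [← hqp]; push_cast; ring
      rw [add_assoc, this]
      push_cast
      simp
    have hexp2 : q - 1 - Q = 0 := by omega
    rw [hidx, hexp2, pow_zero, mul_one]
  rw [e1, e2, e3]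
  omega

lemma num_ge_one (hq : 2 ≤ q) (hcop : Nat.Coprime p q) (hk : 2 ≤ k)
    (m : ZMod q → ℕ) (hC : Cond q p m) (i : ZMod q) :
    1 ≤ num q k p m i := by
  obtain ⟨t, htq, hkey, -, -⟩ := exists_t hcop (i + (p : ZMod q) - 1)
  have hidx : i + ((t * p : ℕ) : ZMod q) = -(p : ZMod q) + 1 := by
    linear_combination hkey
  have hdig : 1 ≤ m (i + ((t * p : ℕ) : ZMod q)) := by
    rw [hidx]
    have := hC.2
    omega
  have hterm : 1 ≤ m (i + ((t * p : ℕ) : ZMod q)) * k ^ (q - 1 - t) := by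
    have h1 : 1 ≤ k ^ (q - 1 - t) := Nat.one_le_pow _ _ (by omega)
    calc 1 = 1 * 1 := by ring
      _ ≤ m (i + ((t * p : ℕ) : ZMod q)) * k ^ (q - 1 - t) := Nat.mul_le_mul hdig h1
  calc 1 ≤ m (i + ((t * p : ℕ) : ZMod q)) * k ^ (q - 1 - t) := hterm
    _ ≤ num q k p m i := by
        rw [num]
        exact Finset.single_le_sum
          (f := fun s => m (i + ((s * p : ℕ) : ZMod q)) * k ^ (q - 1 - s))
          (fun s _ => Nat.zero_le _) (Finset.mem_range.2 htq)

lemma num_le (hq : 2 ≤ q) (hcop : Nat.Coprime p q) (hk : 2 ≤ k)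
    (m : ZMod q → ℕ) (hb : ∀ i, m i ≤ k - 1) (hC : Cond q p m) (i : ZMod q) :
    num q k p m i + 2 ≤ k ^ q := by
  obtain ⟨t, htq, hkey, -, -⟩ := exists_t hcop (i + (p : ZMod q))
  have hidx : i + ((t * p : ℕ) : ZMod q) = -(p : ZMod q) := by
    linear_combination hkey
  have hdig : m (i + ((t * p : ℕ) : ZMod q)) + 1 ≤ k - 1 := by
    rw [hidx]
    have h1 := hC.2
    have h2 := hb (-(p : ZMod q) + 1)
    omega
  have hsplit : (∑ s ∈ (Finset.range q).erase t,
        m (i + ((s * p : ℕ) : ZMod q)) * k ^ (q - 1 - s))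
      + m (i + ((t * p : ℕ) : ZMod q)) * k ^ (q - 1 - t) = num q k p m i :=
    Finset.sum_erase_add _ _ (Finset.mem_range.2 htq)
  have h1 : ∑ s ∈ (Finset.range q).erase t, m (i + ((s * p : ℕ) : ZMod q)) * k ^ (q - 1 - s)
      ≤ ∑ s ∈ (Finset.range q).erase t, (k - 1) * k ^ (q - 1 - s) :=
    Finset.sum_le_sum fun s _ => Nat.mul_le_mul (hb _) le_rfl
  have h2 : m (i + ((t * p : ℕ) : ZMod q)) * k ^ (q - 1 - t) + k ^ (q - 1 - t)
      ≤ (k - 1) * k ^ (q - 1 - t) := by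
    calc m (i + ((t * p : ℕ) : ZMod q)) * k ^ (q - 1 - t) + k ^ (q - 1 - t)
        = (m (i + ((t * p : ℕ) : ZMod q)) + 1) * k ^ (q - 1 - t) := by ring
      _ ≤ (k - 1) * k ^ (q - 1 - t) := Nat.mul_le_mul hdig le_rfl
  have h3 : (∑ s ∈ (Finset.range q).erase t, (k - 1) * k ^ (q - 1 - s))
      + (k - 1) * k ^ (q - 1 - t) = ∑ s ∈ Finset.range q, (k - 1) * k ^ (q - 1 - s) :=
    Finset.sum_erase_add _ _ (Finset.mem_range.2 htq)
  have h4 : ∑ s ∈ Finset.range q, (k - 1) * k ^ (q - 1 - s)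
      = ∑ s ∈ Finset.range q, (k - 1) * k ^ s :=
    Finset.sum_range_reflect (fun s => (k - 1) * k ^ s) q
  have h5 := geom_aux k (by omega) q
  have h6 : 1 ≤ k ^ (q - 1 - t) := Nat.one_le_pow _ _ (by omega)
  omega

lemma num_lt_num (hq : 2 ≤ q) (hcop : Nat.Coprime p q) (hk : 2 ≤ k)
    (m : ZMod q → ℕ) (hb : ∀ i, m i ≤ k - 1) (hC : Cond q p m)
    {i : ZMod q} (hi : i ≠ 0) :
    num q k p m i + 1 ≤ num q k p m (i + 1) := by
  obtain ⟨t, htq, hkey, huniq, ht1⟩ := exists_t hcop i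
  have ht1' : 1 ≤ t := ht1 hi
  have hAB : ∀ s, s < q → s ≠ t →
      m (i + ((s * p : ℕ) : ZMod q)) ≤ m ((i + 1) + ((s * p : ℕ) : ZMod q)) := by
    intro s hs hst
    have hne : i + ((s * p : ℕ) : ZMod q) ≠ 0 := fun h0 => hst (huniq s hs h0)
    have h := hC.1 _ hne
    have hcomm : (i + ((s * p : ℕ) : ZMod q)) + 1 = (i + 1) + ((s * p : ℕ) : ZMod q) := by ring
    rwa [hcomm] at h
  have hstrict : m (i + (((t - 1) * p : ℕ) : ZMod q)) + 1
      ≤ m ((i + 1) + (((t - 1) * p : ℕ) : ZMod q)) := by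
    have hmul : ((t - 1) * p + p : ℕ) = t * p := by
      have ht' : t - 1 + 1 = t := by omega
      calc (t - 1) * p + p = ((t - 1) + 1) * p := by ring
        _ = t * p := by rw [ht']
    have hcast2 : (((t - 1) * p : ℕ) : ZMod q) + (p : ZMod q) = ((t * p : ℕ) : ZMod q) := by
      rw [← hmul]; push_cast; ring
    have hidx : i + (((t - 1) * p : ℕ) : ZMod q) = -(p : ZMod q) := by
      linear_combination hkey + hcast2
    have hBidx : (i + 1) + (((t - 1) * p : ℕ) : ZMod q) = -(p : ZMod q) + 1 := by
      rw [← hidx]; ring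
    rw [hidx, hBidx]
    exact hC.2
  have hnum_i : num q k p m i
      = (∑ s ∈ Finset.range t, m (i + ((s * p : ℕ) : ZMod q)) * k ^ (q - 1 - s))
        + ∑ s ∈ Finset.Ico t q, m (i + ((s * p : ℕ) : ZMod q)) * k ^ (q - 1 - s) := by
    rw [num, Finset.range_eq_Ico, ← Finset.sum_Ico_consecutive _ (Nat.zero_le t) htq.le,
      ← Finset.range_eq_Ico]
  have hnum_i1 : num q k p m (i + 1)
      = (∑ s ∈ Finset.range t, m ((i + 1) + ((s * p : ℕ) : ZMod q)) * k ^ (q - 1 - s))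
        + ∑ s ∈ Finset.Ico t q, m ((i + 1) + ((s * p : ℕ) : ZMod q)) * k ^ (q - 1 - s) := by
    rw [num, Finset.range_eq_Ico, ← Finset.sum_Ico_consecutive _ (Nat.zero_le t) htq.le,
      ← Finset.range_eq_Ico]
  have hS2 : (∑ s ∈ Finset.Ico t q, m (i + ((s * p : ℕ) : ZMod q)) * k ^ (q - 1 - s)) + 1
      ≤ k ^ (q - t) := by
    have hle : ∑ s ∈ Finset.Ico t q, m (i + ((s * p : ℕ) : ZMod q)) * k ^ (q - 1 - s)
        ≤ ∑ s ∈ Finset.Ico t q, (k - 1) * k ^ (q - 1 - s) :=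
      Finset.sum_le_sum fun s _ => Nat.mul_le_mul (hb _) le_rfl
    have heq : ∑ s ∈ Finset.Ico t q, (k - 1) * k ^ (q - 1 - s)
        = ∑ u ∈ Finset.range (q - t), (k - 1) * k ^ u := by
      rw [Finset.sum_Ico_eq_sum_range]
      rw [← Finset.sum_range_reflect (fun u => (k - 1) * k ^ u) (q - t)]
      refine Finset.sum_congr rfl fun u hu => ?_
      rw [Finset.mem_range] at hu
      have : q - 1 - (t + u) = q - t - 1 - u := by omega
      rw [this]
    have hgeo := geom_aux k (by omega) (q - t)
    omega
  have hS1 : (∑ s ∈ Finset.range t, m (i + ((s * p : ℕ) : ZMod q)) * k ^ (q - 1 - s)) + k ^ (q - t)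
      ≤ ∑ s ∈ Finset.range t, m ((i + 1) + ((s * p : ℕ) : ZMod q)) * k ^ (q - 1 - s) := by
    obtain ⟨T, hT⟩ : ∃ T, t = T + 1 := ⟨t - 1, by omega⟩
    have hTt : t - 1 = T := by omega
    rw [show Finset.range t = Finset.range (T + 1) from by rw [hT],
      Finset.sum_range_succ, Finset.sum_range_succ]
    have hexp : q - 1 - T = q - t := by omega
    rw [hexp]
    rw [hTt] at hstrict
    have hterm : m (i + ((T * p : ℕ) : ZMod q)) * k ^ (q - t) + k ^ (q - t)
        ≤ m ((i + 1) + ((T * p : ℕ) : ZMod q)) * k ^ (q - t) := by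
      calc m (i + ((T * p : ℕ) : ZMod q)) * k ^ (q - t) + k ^ (q - t)
          = (m (i + ((T * p : ℕ) : ZMod q)) + 1) * k ^ (q - t) := by ring
        _ ≤ m ((i + 1) + ((T * p : ℕ) : ZMod q)) * k ^ (q - t) :=
            Nat.mul_le_mul hstrict le_rfl
    have hrest : ∑ s ∈ Finset.range T, m (i + ((s * p : ℕ) : ZMod q)) * k ^ (q - 1 - s)
        ≤ ∑ s ∈ Finset.range T, m ((i + 1) + ((s * p : ℕ) : ZMod q)) * k ^ (q - 1 - s) := by
      refine Finset.sum_le_sum fun s hs => ?_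
      rw [Finset.mem_range] at hs
      exact Nat.mul_le_mul (hAB s (by omega) (by omega)) le_rfl
    omega
  have hfin : ∑ s ∈ Finset.range t, m ((i + 1) + ((s * p : ℕ) : ZMod q)) * k ^ (q - 1 - s)
      ≤ num q k p m (i + 1) := by
    rw [hnum_i1]
    exact Nat.le_add_right _ _
  omega

/-! ### the realization attached to a digit function -/

def xm (q k p : ℕ) [NeZero q] (m : ZMod q → ℕ) (i : ZMod q) : ℝ :=
  (num q k p m i : ℝ) / ((k : ℝ) ^ q - 1)

lemma denom_pos (hq : 1 ≤ q) (hk : 2 ≤ k) : (0 : ℝ) < (k : ℝ) ^ q - 1 := by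
  have h0 : (1 : ℕ) < k := by omega
  have h1 : (1 : ℝ) < (k : ℝ) := by exact_mod_cast h0
  have := one_lt_pow₀ h1 (by omega : q ≠ 0)
  linarith

lemma xm_rec (hq : 1 ≤ q) (hk : 2 ≤ k) (m : ZMod q → ℕ) (i : ZMod q) :
    (k : ℝ) * xm q k p m i = xm q k p m (i + (p : ZMod q)) + m i := by
  have hD := denom_pos hq hk
  have hnat := num_rec (k := k) (p := p) hq m i
  have hr : (k : ℝ) * (num q k p m i : ℝ) + (m i : ℝ)
      = (num q k p m (i + (p : ZMod q)) : ℝ) + (m i : ℝ) * (k : ℝ) ^ q := by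
    exact_mod_cast hnat
  rw [xm, xm]
  field_simp
  linear_combination hr

lemma xm_mem (hq : 2 ≤ q) (hcop : Nat.Coprime p q) (hk : 2 ≤ k)
    (m : ZMod q → ℕ) (hb : ∀ i, m i ≤ k - 1) (hC : Cond q p m) (i : ZMod q) :
    xm q k p m i ∈ Set.Ioo (0 : ℝ) 1 := by
  have hD := denom_pos (q := q) (by omega : 1 ≤ q) hk
  constructor
  · have h1 := num_ge_one hq hcop hk m hC i
    have h2 : (0 : ℝ) < (num q k p m i : ℝ) := by
      have : 0 < num q k p m i := by omega
      exact_mod_cast this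
    exact div_pos h2 hD
  · rw [xm, div_lt_one hD]
    have h := num_le hq hcop hk m hb hC i
    have h2 : ((num q k p m i : ℕ) : ℝ) + 2 ≤ ((k ^ q : ℕ) : ℝ) := by exact_mod_cast h
    push_cast at h2
    linarith

lemma xm_consec (hq : 2 ≤ q) (hcop : Nat.Coprime p q) (hk : 2 ≤ k)
    (m : ZMod q → ℕ) (hb : ∀ i, m i ≤ k - 1) (hC : Cond q p m)
    {r : ℕ} (h1 : 1 ≤ r) (h2 : r + 1 ≤ q) :
    xm q k p m ((r : ℕ) : ZMod q) < xm q k p m ((r + 1 : ℕ) : ZMod q) := by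
  have hD := denom_pos (by omega : 1 ≤ q) hk
  have hne : ((r : ℕ) : ZMod q) ≠ 0 := by
    intro h0
    have hv := ZMod.val_cast_of_lt (show r < q by omega)
    rw [h0] at hv
    simp at hv
    omega
  have hnum := num_lt_num hq hcop hk m hb hC hne
  have hcast : ((r + 1 : ℕ) : ZMod q) = ((r : ℕ) : ZMod q) + 1 := by push_cast; ring
  rw [xm, xm, div_lt_div_iff_of_pos_right hD, hcast]
  exact_mod_cast hnum

lemma xm_chain (hq : 2 ≤ q) (hcop : Nat.Coprime p q) (hk : 2 ≤ k)
    (m : ZMod q → ℕ) (hb : ∀ i, m i ≤ k - 1) (hC : Cond q p m) :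
    ∀ d r : ℕ, 1 ≤ r → r + d + 1 ≤ q →
      xm q k p m ((r : ℕ) : ZMod q) < xm q k p m ((r + d + 1 : ℕ) : ZMod q) := by
  intro d
  induction d with
  | zero =>
    intro r h1 h2
    exact xm_consec hq hcop hk m hb hC h1 (by omega)
  | succ d ih =>
    intro r h1 h2
    have ha := ih r h1 (by omega)
    have hb2 := xm_consec hq hcop hk m hb hC (show 1 ≤ r + d + 1 by omega)
      (show (r + d + 1) + 1 ≤ q by omega)
    have hcast : (r + d + 1 + 1 : ℕ) = (r + (d + 1) + 1 : ℕ) := by omega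
    rw [hcast] at hb2
    exact ha.trans hb2

lemma xm_rep_lt (hq : 2 ≤ q) (hcop : Nat.Coprime p q) (hk : 2 ≤ k)
    (m : ZMod q → ℕ) (hb : ∀ i, m i ≤ k - 1) (hC : Cond q p m)
    {i j : ZMod q} (hij : rep q i < rep q j) :
    xm q k p m i < xm q k p m j := by
  have h := xm_chain hq hcop hk m hb hC (rep q j - rep q i - 1) (rep q i)
    (rep_pos i) (by have := rep_le j; omega)
  have he : rep q i + (rep q j - rep q i - 1) + 1 = rep q j := by omega
  rw [he, rep_cast, rep_cast] at h
  exact h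

lemma xm_realizes (hq : 2 ≤ q) (hk : 2 ≤ k) (hcop : Nat.Coprime p q)
    (m : ZMod q → ℕ) (hb : ∀ i, m i ≤ k - 1) (hC : Cond q p m) :
    MkRealization q k (rotPerm q ^ p) (xm q k p m) := by
  refine ⟨fun i => xm_mem hq hcop hk m hb hC i,
    fun i j hij => xm_rep_lt hq hcop hk m hb hC hij,
    fun i => ⟨(m i : ℤ), ?_⟩⟩
  show (k : ℝ) * xm q k p m i = xm q k p m ((rotPerm q ^ p) i) + ((m i : ℤ) : ℝ)
  rw [rot_pow]
  push_cast
  exact xm_rec (by omega) hk m i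

lemma xm_inj (hq : 2 ≤ q) (hk : 2 ≤ k) (m m' : ZMod q → ℕ)
    (h : xm q k p m = xm q k p m') : m = m' := by
  funext i
  have h1 := xm_rec (q := q) (k := k) (p := p) (by omega) hk m i
  have h2 := xm_rec (q := q) (k := k) (p := p) (by omega) hk m' i
  rw [h] at h1
  have : (m i : ℝ) = (m' i : ℝ) := by linarith
  exact_mod_cast this

/-! ### every realization comes from digits -/

lemma realization_eq_xm (hq : 2 ≤ q) (hk : 2 ≤ k) (hp1 : 1 ≤ p) (hpq : p < q)
    (hcop : Nat.Coprime p q) {x : ZMod q → ℝ}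
    (hx : MkRealization q k (rotPerm q ^ p) x) :
    ∃ m : ZMod q → ℕ, (∀ i, m i ≤ k - 1) ∧ Cond q p m ∧ x = xm q k p m := by
  haveI : Fact (1 < q) := ⟨by omega⟩
  obtain ⟨hIoo, hord, hmap⟩ := hx
  choose c hc using hmap
  have hk0' : (0 : ℝ) < (k : ℝ) := by positivity
  have hc' : ∀ i, (k : ℝ) * x i = x (i + (p : ZMod q)) + c i := by
    intro i
    have h := hc i
    rwa [rot_pow] at h
  have hcb : ∀ i, 0 ≤ c i ∧ c i ≤ (k : ℤ) - 1 := by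
    intro i
    have h1 := hIoo i
    have h2 := hIoo (i + (p : ZMod q))
    have h3 := hc' i
    have hkx : (0 : ℝ) < (k : ℝ) * x i := mul_pos hk0' h1.1
    have hkx2 : (k : ℝ) * x i < k := by nlinarith [h1.2]
    constructor
    · have hlt : (-1 : ℝ) < (c i : ℝ) := by linarith [h2.2]
      have : (-1 : ℤ) < c i := by exact_mod_cast hlt
      omega
    · have hlt : (c i : ℝ) < (k : ℝ) := by linarith [h2.1]
      have : c i < (k : ℤ) := by exact_mod_cast hlt
      omega
  set m : ZMod q → ℕ := fun i => (c i).toNat with hm_def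
  have hm : ∀ i, (m i : ℝ) = c i := by
    intro i
    have h0 := (hcb i).1
    simp only [hm_def]
    exact_mod_cast congrArg (Int.cast : ℤ → ℝ) (Int.toNat_of_nonneg h0)
  have hb : ∀ i, m i ≤ k - 1 := by
    intro i
    have h1 := (hcb i).2
    have h2 : (m i : ℤ) = c i := by
      have := (hcb i).1
      simp [hm_def, Int.toNat_of_nonneg this]
    omega
  have hrec : ∀ i, (k : ℝ) * x i = x (i + (p : ZMod q)) + m i := by
    intro i
    rw [hm]
    exact hc' i
  have hordc : ∀ i : ZMod q, i ≠ 0 → x i < x (i + 1) := by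
    intro i hi
    exact hord i (i + 1) (by rw [rep_succ hq hi]; omega)
  have hpne : (-(p : ZMod q)) ≠ 0 := by
    intro h0
    have : ((p : ℕ) : ZMod q) = 0 := by
      have := neg_eq_zero.mp h0
      exact this
    have hv := ZMod.val_cast_of_lt hpq
    rw [this] at hv
    simp at hv
    omega
  have hmono : ∀ i : ZMod q, i ≠ 0 → m i ≤ m (i + 1) := by
    intro i hi
    have h1 : x i < x (i + 1) := hordc i hi
    have h2 := hrec i
    have h3 := hrec (i + 1)
    have h4 := hIoo (i + (p : ZMod q))
    have h5 := hIoo ((i + 1) + (p : ZMod q))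
    have hkpos : (0 : ℝ) < (k : ℝ) * (x (i + 1) - x i) := mul_pos hk0' (by linarith)
    have hcast : (m i : ℝ) < (m (i + 1) : ℝ) + 1 := by nlinarith [h4.1, h4.2, h5.1, h5.2]
    have : m i < m (i + 1) + 1 := by exact_mod_cast hcast
    omega
  have hstrict : m (-(p : ZMod q)) < m (-(p : ZMod q) + 1) := by
    set i := -(p : ZMod q) with hi_def
    have h1 : x i < x (i + 1) := hordc i hpne
    have h2 := hrec i
    have h3 := hrec (i + 1)
    have hip : i + (p : ZMod q) = 0 := by rw [hi_def]; ring
    have hip1 : (i + 1) + (p : ZMod q) = 1 := by rw [hi_def]; ring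
    rw [hip] at h2
    rw [hip1] at h3
    have h01 : x 1 < x 0 := by
      refine hord 1 0 ?_
      have hr1 : rep q (1 : ZMod q) = 1 := by
        unfold rep
        rw [if_neg (one_ne_zero), ZMod.val_one]
      have hr0 : rep q (0 : ZMod q) = q := by
        unfold rep
        rw [if_pos rfl]
      rw [hr1, hr0]
      omega
    have hkpos : (0 : ℝ) < (k : ℝ) * (x (i + 1) - x i) := mul_pos hk0' (by linarith)
    have hcast : (m i : ℝ) < (m (i + 1) : ℝ) := by nlinarith
    exact_mod_cast hcast
  refine ⟨m, hb, ⟨hmono, hstrict⟩, ?_⟩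
  have key : ∀ n : ℕ, ∀ i : ZMod q, x i * (k : ℝ) ^ n
      = (∑ t ∈ Finset.range n, (m (i + ((t * p : ℕ) : ZMod q)) : ℝ) * (k : ℝ) ^ (n - 1 - t))
        + x (i + ((n * p : ℕ) : ZMod q)) := by
    intro n
    induction n with
    | zero => intro i; simp
    | succ n ih =>
      intro i
      have h1 := ih i
      have step : x i * (k : ℝ) ^ (n + 1)
          = (∑ t ∈ Finset.range n, (m (i + ((t * p : ℕ) : ZMod q)) : ℝ) * (k : ℝ) ^ (n - t))
            + ((k : ℝ) * x (i + ((n * p : ℕ) : ZMod q))) := by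
        calc x i * (k : ℝ) ^ (n + 1) = (x i * (k : ℝ) ^ n) * k := by ring
          _ = ((∑ t ∈ Finset.range n, (m (i + ((t * p : ℕ) : ZMod q)) : ℝ) * (k : ℝ) ^ (n - 1 - t))
              + x (i + ((n * p : ℕ) : ZMod q))) * k := by rw [h1]
          _ = (∑ t ∈ Finset.range n, (m (i + ((t * p : ℕ) : ZMod q)) : ℝ) * (k : ℝ) ^ (n - 1 - t) * k)
              + ((k : ℝ) * x (i + ((n * p : ℕ) : ZMod q))) := by
                rw [add_mul, Finset.sum_mul]; ring
          _ = (∑ t ∈ Finset.range n, (m (i + ((t * p : ℕ) : ZMod q)) : ℝ) * (k : ℝ) ^ (n - t))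
              + ((k : ℝ) * x (i + ((n * p : ℕ) : ZMod q))) := by
                congr 1
                refine Finset.sum_congr rfl fun t ht => ?_
                rw [Finset.mem_range] at ht
                have he : n - 1 - t + 1 = n - t := by omega
                rw [← he, pow_succ]
                ring
      rw [step, hrec (i + ((n * p : ℕ) : ZMod q))]
      rw [Finset.sum_range_succ]
      have hidx : (i + ((n * p : ℕ) : ZMod q)) + (p : ZMod q) = i + (((n + 1) * p : ℕ) : ZMod q) := by
        push_cast
        ring
      have hexp : (n + 1) - 1 - n = 0 := by omega
      have hee : ∀ t ∈ Finset.range n, (m (i + ((t * p : ℕ) : ZMod q)) : ℝ) * (k : ℝ) ^ (n - t)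
          = (m (i + ((t * p : ℕ) : ZMod q)) : ℝ) * (k : ℝ) ^ ((n + 1) - 1 - t) := by
        intro t ht
        rw [Finset.mem_range] at ht
        have he2 : n - t = (n + 1) - 1 - t := by omega
        rw [he2]
      rw [Finset.sum_congr rfl hee, hidx, hexp, pow_zero, mul_one]
      ring
  funext i
  have hkq := key q i
  have hzero : ((q * p : ℕ) : ZMod q) = 0 := by
    push_cast
    simp
  rw [hzero, add_zero] at hkq
  have hnum : ((num q k p m i : ℕ) : ℝ)
      = ∑ t ∈ Finset.range q, (m (i + ((t * p : ℕ) : ZMod q)) : ℝ) * (k : ℝ) ^ (q - 1 - t) := by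
    rw [num]
    push_cast
    rfl
  have hD := denom_pos (q := q) (by omega : 1 ≤ q) hk
  rw [← hnum] at hkq
  rw [xm, eq_div_iff (ne_of_gt hD)]
  linarith [hkq]

/-! ### counting digit functions -/

def Df (q k p : ℕ) [NeZero q] : Finset (ZMod q → Fin k) :=
  Finset.univ.filter fun m => Cond q p (fun i => (m i : ℕ))

def gval (q k p : ℕ) [NeZero q] (m : ZMod q → Fin k) (s : ℕ) : ℕ :=
  (m ((s + 1 : ℕ) : ZMod q) : ℕ) + s - (if q - p ≤ s then 1 else 0)

lemma gval_lt (hq : 2 ≤ q) (hk : 2 ≤ k) (hp1 : 1 ≤ p) (hpq : p < q)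
    (m : ZMod q → Fin k) {s : ℕ} (hs : s < q) :
    gval q k p m s < q + k - 2 := by
  have ha : (m ((s + 1 : ℕ) : ZMod q) : ℕ) < k := Fin.is_lt _
  unfold gval
  split_ifs with h <;> omega

lemma gval_consec (hq : 2 ≤ q) (hp1 : 1 ≤ p) (hpq : p < q) (m : ZMod q → Fin k)
    (hC : Cond q p (fun i => (m i : ℕ))) {s : ℕ} (hs : s + 1 < q) :
    gval q k p m s < gval q k p m (s + 1) := by
  set i : ZMod q := ((s + 1 : ℕ) : ZMod q) with hi_def
  have hi : i ≠ 0 := by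
    intro h0
    have hv := ZMod.val_cast_of_lt (show s + 1 < q from hs)
    rw [← hi_def, h0] at hv
    simp at hv
  have hcast : ((s + 1 + 1 : ℕ) : ZMod q) = i + 1 := by rw [hi_def]; push_cast; ring
  have hstep : (m i : ℕ) ≤ (m (i + 1) : ℕ) := hC.1 i hi
  have hg1 : gval q k p m s = (m i : ℕ) + s - (if q - p ≤ s then 1 else 0) := rfl
  have hg2 : gval q k p m (s + 1)
      = (m (i + 1) : ℕ) + (s + 1) - (if q - p ≤ s + 1 then 1 else 0) := by
    unfold gval
    rw [hcast]
  by_cases hcr : s + 1 = q - p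
  · have hiq : i = -(p : ZMod q) := by
      have hsum : ((s + 1 + p : ℕ) : ZMod q) = 0 := by
        rw [show s + 1 + p = q from by omega]
        simp
      have h2 : i + ((p : ℕ) : ZMod q) = 0 := by
        rw [hi_def]
        push_cast at hsum ⊢
        linear_combination hsum
      exact eq_neg_of_add_eq_zero_left h2
    have hstrict : (m i : ℕ) < (m (i + 1) : ℕ) := by
      have h2 := hC.2
      rw [← hiq] at h2
      exact h2
    rw [hg1, hg2, if_neg (by omega), if_pos (by omega)]
    omega
  · rw [hg1, hg2]
    by_cases hle : q - p ≤ s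
    · rw [if_pos hle, if_pos (by omega)]
      omega
    · rw [if_neg hle, if_neg (by omega)]
      omega

lemma gval_chain (hq : 2 ≤ q) (hp1 : 1 ≤ p) (hpq : p < q) (m : ZMod q → Fin k)
    (hC : Cond q p (fun i => (m i : ℕ))) :
    ∀ d s : ℕ, s + d + 1 < q → gval q k p m s < gval q k p m (s + d + 1) := by
  intro d
  induction d with
  | zero =>
    intro s h
    exact gval_consec hq hp1 hpq m hC h
  | succ d ih =>
    intro s h
    have h1 := ih s (by omega)
    have h2 := gval_consec hq hp1 hpq m hC (show (s + d + 1) + 1 < q by omega)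
    have he : s + d + 1 + 1 = s + (d + 1) + 1 := by omega
    rw [he] at h2
    exact h1.trans h2

lemma gval_strict (hq : 2 ≤ q) (hp1 : 1 ≤ p) (hpq : p < q) (m : ZMod q → Fin k)
    (hC : Cond q p (fun i => (m i : ℕ))) {s s' : ℕ} (h : s < s') (h2 : s' < q) :
    gval q k p m s < gval q k p m s' := by
  have := gval_chain hq hp1 hpq m hC (s' - s - 1) s (by omega)
  rwa [show s + (s' - s - 1) + 1 = s' from by omega] at this

lemma emb_grow {E : Finset ℕ} (hcard : E.card = q) :
    ∀ d s : ℕ, (h : s + d < q) →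
      (E.orderEmbOfFin hcard ⟨s, by omega⟩ : ℕ) + d ≤ E.orderEmbOfFin hcard ⟨s + d, h⟩ := by
  intro d
  induction d with
  | zero => intro s h; simp
  | succ d ih =>
    intro s h
    have h1 := ih s (by omega)
    have h2 : (E.orderEmbOfFin hcard ⟨s + d, by omega⟩ : ℕ)
        < E.orderEmbOfFin hcard ⟨s + d + 1, by omega⟩ :=
      (E.orderEmbOfFin hcard).strictMono (Fin.mk_lt_mk.2 (by omega))
    have he2 : (E.orderEmbOfFin hcard ⟨s + d + 1, by omega⟩ : ℕ)
        = E.orderEmbOfFin hcard ⟨s + (d + 1), h⟩ := rfl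
    omega

def jnat (q p : ℕ) [NeZero q] (E : Finset ℕ) (hcard : E.card = q) (i : ZMod q) : ℕ :=
  (E.orderEmbOfFin hcard
      ⟨rep q i - 1, by have h1 := rep_le (q := q) i; have h2 := rep_pos (q := q) i; omega⟩ : ℕ)
    + (if q - p + 1 ≤ rep q i then 1 else 0) - (rep q i - 1)

lemma jnat_eq {E : Finset ℕ} (hcard : E.card = q) (i : ZMod q) (s : ℕ) (hs : s < q)
    (h : rep q i - 1 = s) :
    jnat q p E hcard i = (E.orderEmbOfFin hcard ⟨s, hs⟩ : ℕ)
      + (if q - p + 1 ≤ rep q i then 1 else 0) - s := by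
  subst h
  rfl

lemma jnat_facts (hq : 2 ≤ q) (hk : 2 ≤ k) (hp1 : 1 ≤ p) (hpq : p < q)
    {E : Finset ℕ} (hcard : E.card = q) (hsub : E ⊆ Finset.range (q + k - 2)) :
    (∀ i, jnat q p E hcard i ≤ k - 1) ∧ Cond q p (jnat q p E hcard) ∧
    (∀ (s : ℕ) (hs : s < q), jnat q p E hcard ((s + 1 : ℕ) : ZMod q)
        = (E.orderEmbOfFin hcard ⟨s, hs⟩ : ℕ) + (if q - p ≤ s then 1 else 0) - s) ∧
    (∀ (s : ℕ) (h : s < q), s ≤ E.orderEmbOfFin hcard ⟨s, h⟩) := by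
  have hlow : ∀ (s : ℕ) (h : s < q), s ≤ E.orderEmbOfFin hcard ⟨s, h⟩ := by
    intro s h
    have h1 := emb_grow hcard s 0 (by omega)
    have h2 : E.orderEmbOfFin hcard ⟨0 + s, by omega⟩ = E.orderEmbOfFin hcard ⟨s, h⟩ := by
      congr 1
      exact Fin.ext (by simp)
    omega
  have hup : ∀ (s : ℕ) (h : s < q), (E.orderEmbOfFin hcard ⟨s, h⟩ : ℕ) ≤ s + k - 2 := by
    intro s h
    have h1 := emb_grow hcard (q - 1 - s) s (by omega)
    have hb1 : E.orderEmbOfFin hcard ⟨s, by omega⟩ = E.orderEmbOfFin hcard ⟨s, h⟩ := rfl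
    have h2 : E.orderEmbOfFin hcard ⟨s + (q - 1 - s), by omega⟩
        ∈ Finset.range (q + k - 2) := hsub (Finset.orderEmbOfFin_mem E hcard _)
    rw [Finset.mem_range] at h2
    omega
  have hbound : ∀ i, jnat q p E hcard i ≤ k - 1 := by
    intro i
    have hrle := rep_le (q := q) i
    have hrpos := rep_pos (q := q) i
    have h1 : rep q i - 1 < q := by omega
    rw [jnat_eq hcard i (rep q i - 1) h1 rfl]
    have hu := hup (rep q i - 1) h1
    have hl := hlow (rep q i - 1) h1
    split_ifs <;> omega
  refine ⟨hbound, ⟨?_, ?_⟩, ?_, hlow⟩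
  · -- monotone condition
    intro i hi
    have hrlt : rep q i < q := rep_lt_of_ne hi
    have hrpos := rep_pos (q := q) i
    have hrs := rep_succ hq hi
    have h1 : rep q i - 1 < q := by omega
    have h2 : rep q i - 1 + 1 < q := by omega
    rw [jnat_eq hcard i (rep q i - 1) h1 rfl,
      jnat_eq hcard (i + 1) (rep q i - 1 + 1) h2 (by omega)]
    have hmono := emb_grow hcard 1 (rep q i - 1) h2
    have hl := hlow (rep q i - 1) h1
    have hl2 := hlow (rep q i - 1 + 1) h2
    rw [hrs]
    split_ifs <;> omega
  · -- strict condition at -p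
    have hpne : (-(p : ZMod q)) ≠ 0 := by
      intro h0
      have h1 := neg_eq_zero.mp h0
      have hv := ZMod.val_cast_of_lt hpq
      rw [h1] at hv
      simp at hv
      omega
    have hpval : ((p : ℕ) : ZMod q).val = p := ZMod.val_cast_of_lt hpq
    have hpcne : ((p : ℕ) : ZMod q) ≠ 0 := by
      intro h0
      rw [h0] at hpval
      simp at hpval
      omega
    have hrep : rep q (-(p : ZMod q)) = q - p := by
      unfold rep
      rw [if_neg hpne, ZMod.neg_val, if_neg hpcne, hpval]
    have hrs := rep_succ hq hpne
    have h1 : q - p - 1 < q := by omega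
    have h2 : q - p - 1 + 1 < q := by omega
    rw [jnat_eq hcard (-(p : ZMod q)) (q - p - 1) h1 (by rw [hrep]),
      jnat_eq hcard (-(p : ZMod q) + 1) (q - p - 1 + 1) h2 (by rw [hrs, hrep]; omega)]
    rw [hrs, hrep]
    rw [if_neg (by omega), if_pos (by omega)]
    have hmono := emb_grow hcard 1 (q - p - 1) h2
    have hl := hlow (q - p - 1) h1
    have hl2 := hlow (q - p - 1 + 1) h2
    omega
  · -- value on the standard enumeration
    intro s hs
    have hrep := rep_cast_succ hq hs
    rw [jnat_eq hcard _ s hs (by rw [hrep]; omega)]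
    rw [hrep]
    have hiff : (q - p + 1 ≤ s + 1) ↔ (q - p ≤ s) := by omega
    simp only [hiff]

lemma Df_card (hq : 2 ≤ q) (hk : 2 ≤ k) (hp1 : 1 ≤ p) (hpq : p < q)
    (hcop : Nat.Coprime p q) :
    (Df q k p).card = (q + k - 2).choose q := by
  classical
  have hpc : (Finset.powersetCard q (Finset.range (q + k - 2))).card
      = (q + k - 2).choose q := by
    rw [Finset.card_powersetCard, Finset.card_range]
  rw [← hpc]
  refine Finset.card_bij'
    (fun m _ => (Finset.range q).image (gval q k p m))
    (fun E hE => fun i =>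
      ⟨jnat q p E (Finset.mem_powersetCard.1 hE).2 i % k, Nat.mod_lt _ (by omega)⟩)
    ?_ ?_ ?_ ?_
  · -- forward map lands in powersetCard
    intro m hm
    have hC : Cond q p (fun i => (m i : ℕ)) := (Finset.mem_filter.1 hm).2
    rw [Finset.mem_powersetCard]
    constructor
    · intro y hy
      obtain ⟨s, hsr, rfl⟩ := Finset.mem_image.1 hy
      rw [Finset.mem_range] at hsr ⊢
      exact gval_lt hq hk hp1 hpq m hsr
    · have hinj : Set.InjOn (gval q k p m) ↑(Finset.range q) := by
        intro a ha b hb hab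
        rw [Finset.mem_coe, Finset.mem_range] at ha hb
        rcases lt_trichotomy a b with h | h | h
        · exact absurd hab (ne_of_lt (gval_strict hq hp1 hpq m hC h hb))
        · exact h
        · exact absurd hab.symm (ne_of_lt (gval_strict hq hp1 hpq m hC h ha))
      rw [Finset.card_image_of_injOn hinj, Finset.card_range]
  · -- backward map lands in Df
    intro E hE
    obtain ⟨hb, hC, hval, hge⟩ :=
      jnat_facts hq hk hp1 hpq (Finset.mem_powersetCard.1 hE).2 (Finset.mem_powersetCard.1 hE).1
    rw [Df, Finset.mem_filter]
    refine ⟨Finset.mem_univ _, ?_⟩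
    show Cond q p (fun i => jnat q p E (Finset.mem_powersetCard.1 hE).2 i % k)
    have hmod : (fun i => jnat q p E (Finset.mem_powersetCard.1 hE).2 i % k)
        = jnat q p E (Finset.mem_powersetCard.1 hE).2 := by
      funext i
      exact Nat.mod_eq_of_lt (by have := hb i; omega)
    rw [hmod]
    exact hC
  · -- left inverse
    intro m hm
    have hC : Cond q p (fun i => (m i : ℕ)) := (Finset.mem_filter.1 hm).2
    have key : ∀ (h : ((Finset.range q).image (gval q k p m)).card = q) (i : ZMod q),
        jnat q p ((Finset.range q).image (gval q k p m)) h i % k = (m i : ℕ) := by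
      intro h i
      have huniq : (fun v : Fin q => gval q k p m (v : ℕ))
          = ⇑(((Finset.range q).image (gval q k p m)).orderEmbOfFin h) := by
        refine Finset.orderEmbOfFin_unique h
          (fun v => Finset.mem_image.2 ⟨(v : ℕ), Finset.mem_range.2 v.2, rfl⟩) ?_
        intro a b hab
        exact gval_strict hq hp1 hpq m hC hab b.2
      have hrle := rep_le (q := q) i
      have hrpos := rep_pos (q := q) i
      have h1 : rep q i - 1 < q := by omega
      rw [jnat_eq h i (rep q i - 1) h1 rfl]
      have he : (((Finset.range q).image (gval q k p m)).orderEmbOfFin h) ⟨rep q i - 1, h1⟩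
          = gval q k p m (rep q i - 1) := by
        have h2 := congrFun huniq ⟨rep q i - 1, h1⟩
        simpa using h2.symm
      rw [he]
      have hidx : ((rep q i - 1 + 1 : ℕ) : ZMod q) = i := by
        rw [show rep q i - 1 + 1 = rep q i from by omega]
        exact rep_cast i
      have hg : gval q k p m (rep q i - 1)
          = (m i : ℕ) + (rep q i - 1) - (if q - p ≤ rep q i - 1 then 1 else 0) := by
        unfold gval
        rw [hidx]
      rw [hg]
      have hmk : (m i : ℕ) < k := (m i).2
      have hiff : (q - p + 1 ≤ rep q i) ↔ (q - p ≤ rep q i - 1) := by omega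
      simp only [hiff]
      split_ifs with hcase
      · have hv : (m i : ℕ) + (rep q i - 1) - 1 + 1 - (rep q i - 1) = (m i : ℕ) := by omega
        rw [hv, Nat.mod_eq_of_lt hmk]
      · have hv : (m i : ℕ) + (rep q i - 1) - 0 + 0 - (rep q i - 1) = (m i : ℕ) := by omega
        rw [hv, Nat.mod_eq_of_lt hmk]
    funext i
    exact Fin.ext (key _ i)
  · -- right inverse
    intro E hE
    obtain ⟨hb, hC, hval, hge⟩ :=
      jnat_facts hq hk hp1 hpq (Finset.mem_powersetCard.1 hE).2 (Finset.mem_powersetCard.1 hE).1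
    have heval : ∀ (f : ZMod q → Fin k),
        (∀ i, (f i : ℕ) = jnat q p E (Finset.mem_powersetCard.1 hE).2 i) →
        ∀ (s : ℕ) (hs : s < q),
          gval q k p f s = E.orderEmbOfFin (Finset.mem_powersetCard.1 hE).2 ⟨s, hs⟩ := by
      intro f hf s hs
      have hg : gval q k p f s
          = (f ((s + 1 : ℕ) : ZMod q) : ℕ) + s - (if q - p ≤ s then 1 else 0) := rfl
      rw [hg, hf, hval s hs]
      have hl := hge s hs
      split_ifs with hcase <;> omega
    have hf0 : ∀ i, ((⟨jnat q p E (Finset.mem_powersetCard.1 hE).2 i % k,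
        Nat.mod_lt _ (by omega : 0 < k)⟩ : Fin k) : ℕ)
        = jnat q p E (Finset.mem_powersetCard.1 hE).2 i := by
      intro i
      exact Nat.mod_eq_of_lt (by have := hb i; omega)
    apply Finset.eq_of_subset_of_card_le
    · intro y hy
      obtain ⟨s, hsr, rfl⟩ := Finset.mem_image.1 hy
      rw [Finset.mem_range] at hsr
      rw [heval _ hf0 s hsr]
      exact Finset.orderEmbOfFin_mem E _ _
    · have hinj : Set.InjOn (gval q k p (fun i =>
          (⟨jnat q p E (Finset.mem_powersetCard.1 hE).2 i % k,
            Nat.mod_lt _ (by omega : 0 < k)⟩ : Fin k))) ↑(Finset.range q) := by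
        intro a ha b hb2 hab
        rw [Finset.mem_coe, Finset.mem_range] at ha hb2
        rw [heval _ hf0 a ha, heval _ hf0 b hb2] at hab
        have h2 := (E.orderEmbOfFin (Finset.mem_powersetCard.1 hE).2).injective hab
        exact congrArg Fin.val h2
      rw [Finset.card_image_of_injOn hinj, Finset.card_range,
        (Finset.mem_powersetCard.1 hE).2]

end RotCount

/-- For every integer `k ≥ 2`, every rotation cycle `σ = ρ^p` in `𝒞_q`
(`1 ≤ p < q`, `gcd(p,q) = 1`) has exactly `C(q+k-2, q)` realizations under
`m_k`. -/
theorem rotation_cycle_realization_count (q k p : ℕ) [NeZero q] (hq : 2 ≤ q)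
    (hk : 2 ≤ k) (hp1 : 1 ≤ p) (hpq : p < q) (hcop : Nat.Coprime p q) :
    {x : ZMod q → ℝ | MkRealization q k (rotPerm q ^ p) x}.ncard
      = Nat.choose (q + k - 2) q := by
  classical
  have hSeq : {x : ZMod q → ℝ | MkRealization q k (rotPerm q ^ p) x}
      = (fun (m : ZMod q → Fin k) => RotCount.xm q k p (fun i => (m i : ℕ)))
        '' ↑(RotCount.Df q k p) := by
    ext x
    simp only [Set.mem_setOf_eq, Set.mem_image, Finset.mem_coe]
    constructor
    · intro hx
      obtain ⟨m, hb, hC, rfl⟩ := RotCount.realization_eq_xm hq hk hp1 hpq hcop hx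
      refine ⟨fun i => ⟨m i, by have := hb i; omega⟩, ?_, rfl⟩
      rw [RotCount.Df, Finset.mem_filter]
      exact ⟨Finset.mem_univ _, hC⟩
    · rintro ⟨m, hm, rfl⟩
      have hC : RotCount.Cond q p (fun i => (m i : ℕ)) := (Finset.mem_filter.1 hm).2
      exact RotCount.xm_realizes hq hk hcop _ (fun i => by have := (m i).2; omega) hC
  have hinj : Set.InjOn (fun (m : ZMod q → Fin k) => RotCount.xm q k p (fun i => (m i : ℕ)))
      ↑(RotCount.Df q k p) := by
    intro m1 h1 m2 h2 he
    have h := RotCount.xm_inj (q := q) (k := k) (p := p) hq hk _ _ he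
    funext i
    exact Fin.ext (congrFun h i)
  rw [hSeq, Set.ncard_image_of_injOn hinj, Set.ncard_coe_finset,
    RotCount.Df_card hq hk hp1 hpq hcop]
end
end
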